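/- If N is a linear Nelson algebra and I is an irreducible deductive system of N, then the set of proper deductive systems of N containing I is a chain under inclusion. -/
import Mathlib


/-- A Nelson algebra: a distributive lattice (axioms N1, N2) with a De Morgan
involution `tilde` (N3, N4), the Kleene condition (N5), and a weak implication
`imp` satisfying (N6)-(N8). -/
class NelsonAlgebra (N : Type*) extends DistribLattice N where
  one : N
  tilde : N → N
  imp : N → N → N
  tilde_tilde : ∀ x : N, tilde (tilde x) = x
  tilde_sup : ∀ x y : N, tilde (x ⊔ y) = tilde x ⊓ tilde y
  kleene : ∀ x y : N, x ⊓ tilde x = (x ⊓ tilde x) ⊓ (y ⊔ tilde y)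
  imp_self : ∀ x : N, imp x x = one
  imp_imp : ∀ x y z : N, imp x (imp y z) = imp (x ⊓ y) z
  inf_imp : ∀ x y : N, x ⊓ imp x y = x ⊓ (tilde x ⊔ y)

open NelsonAlgebra

/-- A deductive system: contains 1 and is closed under modus ponens. -/
def IsDeductiveSystem {N : Type*} [NelsonAlgebra N] (D : Set N) : Prop :=
  NelsonAlgebra.one ∈ D ∧ ∀ x y : N, x ∈ D → imp x y ∈ D → y ∈ D

section Aux

variable {N : Type*} [NelsonAlgebra N]

lemma nelson_le_one (x : N) : x ≤ one := by
  have h := inf_imp x x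
  rw [NelsonAlgebra.imp_self] at h
  have h2 : x ⊓ one = x := by
    rw [h]; exact inf_eq_left.mpr le_sup_right
  exact inf_eq_left.mp h2

lemma nelson_tilde_inf (x y : N) : tilde (x ⊓ y) = tilde x ⊔ tilde y := by
  have h := tilde_sup (tilde x) (tilde y)
  rw [tilde_tilde, tilde_tilde] at h
  calc tilde (x ⊓ y) = tilde (tilde (tilde x ⊔ tilde y)) := by rw [h]
    _ = tilde x ⊔ tilde y := tilde_tilde _

lemma nelson_tilde_le {x y : N} (h : x ≤ y) : tilde y ≤ tilde x := by
  have h2 : tilde (x ⊔ y) = tilde x ⊓ tilde y := tilde_sup x y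
  rw [sup_eq_right.mpr h] at h2
  rw [h2]; exact inf_le_left

lemma nelson_imp_one (x : N) : imp x one = one := by
  conv_lhs => rw [show (one : N) = imp x x from (NelsonAlgebra.imp_self x).symm]
  rw [imp_imp, inf_idem, NelsonAlgebra.imp_self]

lemma nelson_imp_eq_one {x y : N} (h : x ≤ tilde x ⊔ y) : imp x y = one := by
  have h1 : x ⊓ imp x y = x := by rw [inf_imp]; exact inf_eq_left.mpr h
  have h2 := imp_imp (imp x y) x y
  rw [NelsonAlgebra.imp_self] at h2
  rw [inf_comm (imp x y) x, h1] at h2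
  exact h2.symm

lemma nelson_imp_eq_one_of_le {x y : N} (h : x ≤ y) : imp x y = one :=
  nelson_imp_eq_one (le_trans h le_sup_right)

lemma nelson_kleene_le (x y : N) : x ⊓ tilde x ≤ y ⊔ tilde y := by
  calc x ⊓ tilde x = (x ⊓ tilde x) ⊓ (y ⊔ tilde y) := kleene x y
    _ ≤ y ⊔ tilde y := inf_le_right

lemma nelson_M (x y : N) :
    tilde x ⊔ tilde (imp x y) = (x ⊔ tilde x) ⊓ (tilde x ⊔ tilde y) := by
  have h := congrArg tilde (inf_imp x y)
  rw [nelson_tilde_inf, nelson_tilde_inf, tilde_sup, tilde_tilde] at h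
  rw [h, sup_inf_left, sup_comm (tilde x) x]

lemma nelson_split {A s₁ s₂ R : N} (h : A ≤ s₁ ⊔ s₂)
    (h1 : A ⊓ s₁ ≤ R) (h2 : A ⊓ s₂ ≤ R) : A ≤ R := by
  calc A = (A ⊓ s₁) ⊔ (A ⊓ s₂) := by rw [← inf_sup_left, inf_eq_left.mpr h]
    _ ≤ R := sup_le h1 h2

lemma nelson_DS_mem_of_le {D : Set N} (hD : IsDeductiveSystem D) {x y : N}
    (hx : x ∈ D) (h : x ≤ y) : y ∈ D :=
  hD.2 x y hx (by rw [nelson_imp_eq_one_of_le h]; exact hD.1)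

lemma nelson_DS_inf_mem {D : Set N} (hD : IsDeductiveSystem D) {x y : N}
    (hx : x ∈ D) (hy : y ∈ D) : x ⊓ y ∈ D := by
  have h1 : imp x (imp y (x ⊓ y)) = one := by rw [imp_imp]; exact NelsonAlgebra.imp_self _
  have h2 : imp y (x ⊓ y) ∈ D := hD.2 x _ hx (by rw [h1]; exact hD.1)
  exact hD.2 y _ hy h2

lemma nelson_ikey (u z w : N) :
    imp (imp u z ⊓ imp u (imp z w)) (imp u w) = one := by
  rw [imp_imp]
  apply nelson_imp_eq_one
  set t := imp u z with ht
  set β := imp u (imp z w) with hβ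
  set A := t ⊓ β ⊓ u with hA
  have hAu : A ≤ u := inf_le_right
  have hAt : A ≤ t := le_trans inf_le_left inf_le_left
  have hAβ : A ≤ β := le_trans inf_le_left inf_le_right
  have hTA : tilde u ⊔ tilde t ≤ tilde A := by
    rw [hA, nelson_tilde_inf, nelson_tilde_inf]
    exact sup_le le_sup_right (le_trans le_sup_left le_sup_left)
  have main : A ≤ (tilde u ⊔ tilde t) ⊔ w := by
    have h1 : A ≤ (u ⊓ tilde u) ⊔ (u ⊓ z) := by
      calc A ≤ u ⊓ t := le_inf hAu hAt
        _ = u ⊓ (tilde u ⊔ z) := inf_imp u z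
        _ = (u ⊓ tilde u) ⊔ (u ⊓ z) := inf_sup_left u (tilde u) z
    refine nelson_split h1 ?_ ?_
    · exact le_trans (le_trans inf_le_right inf_le_right)
        (le_trans le_sup_left le_sup_left)
    · set q := u ⊓ z with hq
      have hβq : β = imp q w := imp_imp u z w
      have h2 : A ⊓ q ≤ (q ⊓ tilde q) ⊔ (q ⊓ w) := by
        calc A ⊓ q ≤ q ⊓ β := le_inf inf_le_right (le_trans inf_le_left hAβ)
          _ = q ⊓ (tilde q ⊔ w) := by rw [hβq, inf_imp]
          _ = (q ⊓ tilde q) ⊔ (q ⊓ w) := inf_sup_left q (tilde q) w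
      refine nelson_split h2 ?_ ?_
      · have h3 : (A ⊓ q) ⊓ (q ⊓ tilde q) ≤ tilde u ⊔ tilde z := by
          calc (A ⊓ q) ⊓ (q ⊓ tilde q) ≤ tilde q :=
                le_trans inf_le_right inf_le_right
            _ = tilde u ⊔ tilde z := by rw [hq, nelson_tilde_inf]
        refine nelson_split h3 ?_ ?_
        · exact le_trans inf_le_right (le_trans le_sup_left le_sup_left)
        · have h4 : ((A ⊓ q) ⊓ (q ⊓ tilde q)) ⊓ tilde z ≤
              (u ⊔ tilde u) ⊓ (tilde u ⊔ tilde z) := by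
            refine le_inf ?_ ?_
            · exact le_trans inf_le_left (le_trans inf_le_left
                (le_trans inf_le_left (le_trans hAu le_sup_left)))
            · exact le_trans inf_le_right le_sup_right
          calc ((A ⊓ q) ⊓ (q ⊓ tilde q)) ⊓ tilde z
              ≤ (u ⊔ tilde u) ⊓ (tilde u ⊔ tilde z) := h4
            _ = tilde u ⊔ tilde t := (nelson_M u z).symm
            _ ≤ (tilde u ⊔ tilde t) ⊔ w := le_sup_left
      · exact le_trans inf_le_right (le_trans inf_le_right le_sup_right)
  calc A ≤ (tilde u ⊔ tilde t) ⊔ w := main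
    _ ≤ tilde A ⊔ w := sup_le_sup_right hTA w

lemma nelson_jkey (c z w : N) :
    imp ((z ⊔ c) ⊓ (imp z w ⊔ c)) (w ⊔ c) = one := by
  apply nelson_imp_eq_one
  set s := imp z w with hs
  set C := (z ⊔ c) ⊓ (s ⊔ c) with hC
  have h1 : C ≤ (z ⊓ s) ⊔ c := le_of_eq (sup_inf_right z s c).symm
  refine nelson_split h1 ?_ ?_
  · have h2 : C ⊓ (z ⊓ s) ≤ (z ⊓ tilde z) ⊔ (z ⊓ w) := by
      calc C ⊓ (z ⊓ s) ≤ z ⊓ s := inf_le_right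
        _ = z ⊓ (tilde z ⊔ w) := inf_imp z w
        _ = (z ⊓ tilde z) ⊔ (z ⊓ w) := inf_sup_left z (tilde z) w
    refine nelson_split h2 ?_ ?_
    · have h3 : (C ⊓ (z ⊓ s)) ⊓ (z ⊓ tilde z) ≤ c ⊔ tilde c :=
        le_trans inf_le_right (nelson_kleene_le z c)
      refine nelson_split h3 ?_ ?_
      · exact le_trans inf_le_right (le_trans le_sup_right le_sup_right)
      · have h4 : ((C ⊓ (z ⊓ s)) ⊓ (z ⊓ tilde z)) ⊓ tilde c ≤
            tilde z ⊓ tilde c :=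
          le_inf (le_trans inf_le_left (le_trans inf_le_right inf_le_right))
            inf_le_right
        have h5 : tilde z ⊓ tilde c ≤ tilde C := by
          rw [hC, nelson_tilde_inf, tilde_sup, tilde_sup]
          exact le_sup_left
        exact le_trans h4 (le_trans h5 le_sup_left)
    · exact le_trans inf_le_right
        (le_trans inf_le_right (le_trans le_sup_left le_sup_right))
  · exact le_trans inf_le_right (le_trans le_sup_right le_sup_right)

lemma nelson_ckey (u z : N) : imp (imp u z ⊓ (z ⊔ u)) z = one := by
  apply nelson_imp_eq_one
  set t := imp u z with ht
  set C := t ⊓ (z ⊔ u) with hC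
  have h1 : C ≤ (t ⊓ z) ⊔ (t ⊓ u) := le_of_eq (inf_sup_left t z u)
  refine nelson_split h1 ?_ ?_
  · exact le_trans inf_le_right (le_trans inf_le_right le_sup_right)
  · have h2 : C ⊓ (t ⊓ u) ≤ (u ⊓ tilde u) ⊔ (u ⊓ z) := by
      calc C ⊓ (t ⊓ u) ≤ u ⊓ t :=
            le_inf (le_trans inf_le_right inf_le_right)
              (le_trans inf_le_right inf_le_left)
        _ = u ⊓ (tilde u ⊔ z) := inf_imp u z
        _ = (u ⊓ tilde u) ⊔ (u ⊓ z) := inf_sup_left u (tilde u) z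
    refine nelson_split h2 ?_ ?_
    · have h3 : (C ⊓ (t ⊓ u)) ⊓ (u ⊓ tilde u) ≤ z ⊔ tilde z :=
        le_trans inf_le_right (nelson_kleene_le u z)
      refine nelson_split h3 ?_ ?_
      · exact le_trans inf_le_right le_sup_right
      · have h4 : ((C ⊓ (t ⊓ u)) ⊓ (u ⊓ tilde u)) ⊓ tilde z ≤
            tilde z ⊓ tilde u :=
          le_inf inf_le_right
            (le_trans inf_le_left (le_trans inf_le_right inf_le_right))
        have h5 : tilde z ⊓ tilde u ≤ tilde C := by
          rw [hC, nelson_tilde_inf, tilde_sup]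
          exact le_sup_right
        exact le_trans h4 (le_trans h5 le_sup_left)
    · exact le_trans inf_le_right (le_trans inf_le_right le_sup_right)

end Aux

/-- A lattice filter: contains 1, upward closed, closed under meets. -/
def IsLatticeFilter {N : Type*} [NelsonAlgebra N] (F : Set N) : Prop :=
  NelsonAlgebra.one ∈ F ∧ (∀ x y : N, x ∈ F → x ≤ y → y ∈ F) ∧
    ∀ x y : N, x ∈ F → y ∈ F → x ⊓ y ∈ F

/-- A prime filter: a proper lattice filter such that x ⊔ y ∈ F implies
x ∈ F or y ∈ F. -/
def IsPrimeFilter {N : Type*} [NelsonAlgebra N] (F : Set N) : Prop :=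
  IsLatticeFilter F ∧ F ≠ Set.univ ∧ ∀ x y : N, x ⊔ y ∈ F → x ∈ F ∨ y ∈ F

/-- An irreducible deductive system. -/
def IsIrreducibleDS {N : Type*} [NelsonAlgebra N] (D : Set N) : Prop :=
  IsDeductiveSystem D ∧ D ≠ Set.univ ∧
    ∀ D₁ D₂ : Set N, IsDeductiveSystem D₁ → IsDeductiveSystem D₂ →
      D = D₁ ∩ D₂ → D = D₁ ∨ D = D₂

theorem linear_chain_above_irreducible {N : Type*} [NelsonAlgebra N]
    (hlin : ∀ x y : N, imp x y ⊔ imp y x = NelsonAlgebra.one)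
    (I : Set N) (hI : IsIrreducibleDS I) :
    IsChain (· ⊆ ·)
      {D : Set N | IsDeductiveSystem D ∧ D ≠ Set.univ ∧ I ⊆ D} := by
  intro D₁ hD₁ D₂ hD₂ _hne
  by_contra hcon
  push_neg at hcon
  obtain ⟨h12, h21⟩ := hcon
  obtain ⟨a, haD₁, haD₂⟩ := Set.not_subset.mp h12
  obtain ⟨b, hbD₂, hbD₁⟩ := Set.not_subset.mp h21
  obtain ⟨hdsI, hIne, hirr⟩ := hI
  obtain ⟨hD₁ds, _, hID₁⟩ := hD₁
  obtain ⟨hD₂ds, _, hID₂⟩ := hD₂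
  set u := imp a b with hu
  set v := imp b a with hv
  have huv : u ⊔ v = one := hlin a b
  -- the two auxiliary deductive systems
  have hJ₁ds : IsDeductiveSystem {z : N | imp u z ∈ I} := by
    constructor
    · show imp u one ∈ I
      rw [nelson_imp_one]; exact hdsI.1
    · intro x y hx hxy
      have hm : imp u x ⊓ imp u (imp x y) ∈ I := nelson_DS_inf_mem hdsI hx hxy
      exact hdsI.2 _ _ hm (by rw [nelson_ikey]; exact hdsI.1)
  have hJ₂ds : IsDeductiveSystem {z : N | z ⊔ u ∈ I} := by
    constructor
    · show one ⊔ u ∈ I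
      rw [sup_eq_left.mpr (nelson_le_one u)]; exact hdsI.1
    · intro x y hx hxy
      have hm : (x ⊔ u) ⊓ (imp x y ⊔ u) ∈ I := nelson_DS_inf_mem hdsI hx hxy
      exact hdsI.2 _ _ hm (by rw [nelson_jkey]; exact hdsI.1)
  have hIJ₁ : I ⊆ {z : N | imp u z ∈ I} := by
    intro z hz
    show imp u z ∈ I
    have h1 : imp z (imp u z) = one := by
      rw [imp_imp]; exact nelson_imp_eq_one_of_le inf_le_left
    exact hdsI.2 z _ hz (by rw [h1]; exact hdsI.1)
  have hIJ₂ : I ⊆ {z : N | z ⊔ u ∈ I} := by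
    intro z hz
    exact nelson_DS_mem_of_le hdsI hz le_sup_left
  have hint : I = {z : N | imp u z ∈ I} ∩ {z : N | z ⊔ u ∈ I} := by
    apply Set.Subset.antisymm (fun z hz => Set.mem_inter (hIJ₁ hz) (hIJ₂ hz))
    rintro z ⟨h1, h2⟩
    have hm : imp u z ⊓ (z ⊔ u) ∈ I := nelson_DS_inf_mem hdsI h1 h2
    exact hdsI.2 _ _ hm (by rw [nelson_ckey]; exact hdsI.1)
  rcases hirr _ _ hJ₁ds hJ₂ds hint with h | h
  · have hmemu : u ∈ I := by
      rw [h]; show imp u u ∈ I; rw [NelsonAlgebra.imp_self]; exact hdsI.1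
    exact hbD₁ (hD₁ds.2 a b haD₁ (hID₁ hmemu))
  · have hmemv : v ∈ I := by
      rw [h]; show v ⊔ u ∈ I; rw [sup_comm, huv]; exact hdsI.1
    exact haD₂ (hD₂ds.2 b a hbD₂ (hID₂ hmemv))
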